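/- Stability of the BIV condition: if mm-spaces X and Y are mm-relative (ε,δ)-close with 0 < ε ≤ ρ/12, and X satisfies BIV(Λ, ρ−2ε, 5ε), then Y satisfies BIV(e^{2δ}Λ, ρ, ε). -/

import Mathlib

open MeasureTheory Metric Set

/-- Closed `ε`-neighborhood of a set with respect to a distance function `d`. -/
def nbhdC {Z : Type*} (d : Z → Z → ℝ) (ε : ℝ) (A : Set Z) : Set Z :=
  {z | ∃ a ∈ A, d z a ≤ ε}

/-- `d` is a semi-metric on the disjoint union `X ⊕ Y` extending the metrics of `X` and `Y`. -/
def IsSemiMetricExt {X Y : Type*} [MetricSpace X] [MetricSpace Y]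
    (d : X ⊕ Y → X ⊕ Y → ℝ) : Prop :=
  (∀ z, d z z = 0) ∧ (∀ z w, 0 ≤ d z w) ∧ (∀ z w, d z w = d w z) ∧
  (∀ z w v, d z v ≤ d z w + d w v) ∧
  (∀ x x' : X, d (Sum.inl x) (Sum.inl x') = dist x x') ∧
  (∀ y y' : Y, d (Sum.inr y) (Sum.inr y') = dist y y')

/-- The mm-spaces `X` and `Y` are mm-relative `(ε,δ)`-close. -/
def MMClose {X Y : Type*} [MetricSpace X] [MetricSpace Y]
    [MeasurableSpace X] [MeasurableSpace Y]
    (μX : MeasureTheory.Measure X) (μY : MeasureTheory.Measure Y) (ε δ : ℝ) : Prop :=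
  ∃ d : X ⊕ Y → X ⊕ Y → ℝ, IsSemiMetricExt d ∧
    ∀ A : Set (X ⊕ Y), MeasurableSet A →
      μY (Sum.inr ⁻¹' A) ≤ ENNReal.ofReal (Real.exp δ) * μX (Sum.inl ⁻¹' nbhdC d ε A) ∧
      μX (Sum.inl ⁻¹' A) ≤ ENNReal.ofReal (Real.exp δ) * μY (Sum.inr ⁻¹' nbhdC d ε A)

/-- The support of a measure on a metric space. -/
def mSupp {X : Type*} [MetricSpace X] [MeasurableSpace X]
    (μ : MeasureTheory.Measure X) : Set X :=
  {x | ∀ r > 0, 0 < μ (Metric.ball x r)}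

/-- The ball intersection volume condition `BIV(Λ, ρ, ε)`. -/
def BIV {X : Type*} [MetricSpace X] [MeasurableSpace X]
    (μ : MeasureTheory.Measure X) (Λ ρ ε : ℝ) : Prop :=
  ∀ x ∈ mSupp μ, ∀ y ∈ mSupp μ, dist x y ≤ ρ + ε →
    ENNReal.ofReal Λ⁻¹ * μ (Metric.ball x (ρ + ε))
      ≤ μ (Metric.ball x ρ ∩ Metric.ball y ρ)

/-!
Each support point `y` of `μY` has a support point `x` of `μX` with `d(x, y) ≤ ε`: the balls
`B(y, r)` have positive mass, hence so do their `ε`-neighbourhoods in `X`, and compactness of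
`supp μX` lets `r → 0`. For such pairs `(x₁, y₁)`, `(x₂, y₂)` the triangle inequality in `X ⊔ Y`
gives `d(x₁, x₂) ≤ ρ + 3ε`, puts the `ε`-neighbourhood of `B(y₁, ρ + ε)` inside `B(x₁, ρ + 3ε)`
and that of `B(x₁, ρ - 2ε) ∩ B(x₂, ρ - 2ε)` inside `B(y₁, ρ) ∩ B(y₂, ρ)`. So `BIV(Λ, ρ - 2ε, 5ε)`
on `X` transfers to `Y`, each of the two transports costing a factor `e^δ`.
-/

namespace IsSemiMetricExt

variable {X Y : Type*} [MetricSpace X] [MetricSpace Y] {d : X ⊕ Y → X ⊕ Y → ℝ}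

lemma dist_le_through_right (hd : IsSemiMetricExt d) (x x' : X) (y y' : Y) :
    dist x x' ≤ d (.inl x) (.inr y) + dist y y' + d (.inl x') (.inr y') := by
  obtain ⟨-, -, hsymm, htri, hX, hY⟩ := hd
  have := htri (.inl x) (.inr y) (.inl x')
  have := htri (.inr y) (.inr y') (.inl x')
  rw [hX] at *
  rw [hY, hsymm (.inr y')] at *
  linarith

lemma dist_le_through_left (hd : IsSemiMetricExt d) (y y' : Y) (x x' : X) :
    dist y y' ≤ d (.inr y) (.inl x) + dist x x' + d (.inl x') (.inr y') := by
  obtain ⟨-, -, -, htri, hX, hY⟩ := hd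
  have := htri (.inr y) (.inl x) (.inr y')
  have := htri (.inl x) (.inl x') (.inr y')
  rw [hY] at *
  rw [hX] at *
  linarith

lemma le_dist_add (hd : IsSemiMetricExt d) (x x' : X) (y : Y) :
    d (.inl x) (.inr y) ≤ d (.inl x') (.inr y) + dist x x' := by
  obtain ⟨-, -, -, htri, hX, -⟩ := hd
  have := htri (.inl x) (.inl x') (.inr y)
  rw [hX] at this
  linarith

lemma le_add_dist (hd : IsSemiMetricExt d) (x : X) (y y' : Y) :
    d (.inl x) (.inr y) ≤ d (.inl x) (.inr y') + dist y' y := by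
  obtain ⟨-, -, -, htri, -, hY⟩ := hd
  simpa only [hY] using htri (.inl x) (.inr y') (.inr y)

end IsSemiMetricExt

section Transport

variable {X Y : Type*} [MeasurableSpace X] [MeasurableSpace Y] {μX : Measure X} {μY : Measure Y}
  {d : X ⊕ Y → X ⊕ Y → ℝ} {ε : ℝ} {C : ENNReal}

lemma measure_le_mul_measure_of_nbhdC_subset_left
    (h : ∀ A : Set (X ⊕ Y), MeasurableSet A →
      μY (Sum.inr ⁻¹' A) ≤ C * μX (Sum.inl ⁻¹' nbhdC d ε A))
    {S : Set Y} (hS : MeasurableSet S) {T : Set X}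
    (hST : ∀ x, ∀ y ∈ S, d (.inl x) (.inr y) ≤ ε → x ∈ T) :
    μY S ≤ C * μX T := by
  have h := h _ hS.inr_image
  rw [preimage_image_eq _ Sum.inr_injective] at h
  refine h.trans (mul_le_mul_right (measure_mono ?_) _)
  rintro x ⟨-, ⟨y, hy, rfl⟩, hxy⟩
  exact hST x y hy hxy

lemma measure_le_mul_measure_of_nbhdC_subset_right
    (h : ∀ A : Set (X ⊕ Y), MeasurableSet A →
      μX (Sum.inl ⁻¹' A) ≤ C * μY (Sum.inr ⁻¹' nbhdC d ε A))
    {S : Set X} (hS : MeasurableSet S) {T : Set Y}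
    (hST : ∀ y, ∀ x ∈ S, d (.inr y) (.inl x) ≤ ε → y ∈ T) :
    μX S ≤ C * μY T := by
  have h := h _ hS.inl_image
  rw [preimage_image_eq _ Sum.inl_injective] at h
  refine h.trans (mul_le_mul_right (measure_mono ?_) _)
  rintro y ⟨-, ⟨x, hx, rfl⟩, hxy⟩
  exact hST y x hx hxy

end Transport

lemma mSupp_eq_support {Z : Type*} [MetricSpace Z] [MeasurableSpace Z] (μ : Measure Z) :
    mSupp μ = μ.support :=
  ext fun _ => nhds_basis_ball.mem_measureSupport.symm

lemma exists_mem_mSupp_dist_le {X Y : Type*} [MetricSpace X] [CompactSpace X]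
    [MeasurableSpace X] [MetricSpace Y] [MeasurableSpace Y] [BorelSpace Y]
    {μX : Measure X} {μY : Measure Y} {d : X ⊕ Y → X ⊕ Y → ℝ} {ε : ℝ} {C : ENNReal}
    (hd : IsSemiMetricExt d)
    (h : ∀ A : Set (X ⊕ Y), MeasurableSet A →
      μY (Sum.inr ⁻¹' A) ≤ C * μX (Sum.inl ⁻¹' nbhdC d ε A))
    {y : Y} (hy : y ∈ mSupp μY) :
    ∃ x ∈ mSupp μX, d (.inl x) (.inr y) ≤ ε := by
  set f : X → ℝ := fun x => d (.inl x) (.inr y)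
  have near : ∀ r > 0, ∃ x ∈ mSupp μX, f x ≤ ε + r := by
    intro r hr
    have hle : μY (ball y r) ≤ C * μX {x | f x ≤ ε + r} :=
      measure_le_mul_measure_of_nbhdC_subset_left h measurableSet_ball fun x y' hy' hxy' =>
        (hd.le_add_dist x y y').trans (add_le_add hxy' (mem_ball.1 hy').le)
    have hpos : 0 < μX {x | f x ≤ ε + r} :=
      pos_iff_ne_zero.2 fun h0 => (hy r hr).ne' (by simpa [h0] using hle)
    obtain ⟨x, hx, hxs⟩ := Measure.nonempty_inter_support_of_pos hpos
    exact ⟨x, (mSupp_eq_support μX).symm ▸ hxs, hx⟩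
  have hcont : Continuous f := (LipschitzWith.of_le_add (hd.le_dist_add · · y)).continuous
  have hcompact : IsCompact (mSupp μX) :=
    (mSupp_eq_support μX ▸ Measure.isClosed_support).isCompact
  obtain ⟨x₀, hx₀, -⟩ := near 1 one_pos
  obtain ⟨x, hx, hmin⟩ := hcompact.exists_isMinOn ⟨x₀, hx₀⟩ hcont.continuousOn
  refine ⟨x, hx, le_of_forall_pos_le_add fun r hr => ?_⟩
  obtain ⟨x', hx', hx'r⟩ := near r hr
  exact (hmin hx').trans hx'r

lemma ENNReal.ofReal_inv_exp_mul_mul_le {t Λ : ℝ} {a b : ENNReal}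
    (h : ENNReal.ofReal Λ⁻¹ * a ≤ ENNReal.ofReal (Real.exp t) * b) :
    ENNReal.ofReal (Real.exp t * Λ)⁻¹ * a ≤ b := by
  have hcancel : ENNReal.ofReal (Real.exp t)⁻¹ * ENNReal.ofReal (Real.exp t) = 1 := by
    rw [← ENNReal.ofReal_mul (by positivity), inv_mul_cancel₀ (Real.exp_pos t).ne',
      ENNReal.ofReal_one]
  calc ENNReal.ofReal (Real.exp t * Λ)⁻¹ * a
      = ENNReal.ofReal (Real.exp t)⁻¹ * (ENNReal.ofReal Λ⁻¹ * a) := by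
        rw [mul_inv, ENNReal.ofReal_mul (by positivity), mul_assoc]
    _ ≤ ENNReal.ofReal (Real.exp t)⁻¹ * (ENNReal.ofReal (Real.exp t) * b) := by gcongr
    _ = b := by rw [← mul_assoc, hcancel, one_mul]

theorem BIV_stable_under_mm_closeness_general
    {X Y : Type*} [MetricSpace X] [CompactSpace X] [MeasurableSpace X] [BorelSpace X]
    [MetricSpace Y] [MeasurableSpace Y] [BorelSpace Y]
    (μX : Measure X) (μY : Measure Y)
    (Λ ρ ε δ : ℝ)
    (hclose : MMClose μX μY ε δ)
    (hX : BIV μX Λ (ρ - 2 * ε) (5 * ε)) :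
    BIV μY (Real.exp (2 * δ) * Λ) ρ ε := by
  obtain ⟨d, hd, hclose⟩ := hclose
  have toX := fun A hA => (hclose A hA).1
  have toY := fun A hA => (hclose A hA).2
  intro y₁ hy₁ y₂ hy₂ hy₁₂
  obtain ⟨x₁, hx₁, hxy₁⟩ := exists_mem_mSupp_dist_le hd toX hy₁
  obtain ⟨x₂, hx₂, hxy₂⟩ := exists_mem_mSupp_dist_le hd toX hy₂
  have hx₁₂ : dist x₁ x₂ ≤ ρ - 2 * ε + 5 * ε := by
    linarith [hd.dist_le_through_right x₁ x₂ y₁ y₂]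
  have hball : μY (ball y₁ (ρ + ε)) ≤ .ofReal (Real.exp δ) * μX (ball x₁ (ρ - 2 * ε + 5 * ε)) :=
    measure_le_mul_measure_of_nbhdC_subset_left toX measurableSet_ball fun x y hy hxy => by
      rw [mem_ball]; linarith [mem_ball.1 hy, hd.dist_le_through_right x x₁ y y₁]
  have hinter : μX (ball x₁ (ρ - 2 * ε) ∩ ball x₂ (ρ - 2 * ε))
      ≤ .ofReal (Real.exp δ) * μY (ball y₁ ρ ∩ ball y₂ ρ) :=
    measure_le_mul_measure_of_nbhdC_subset_right toY (measurableSet_ball.inter measurableSet_ball)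
      fun y x ⟨hx₁', hx₂'⟩ hxy =>
        ⟨mem_ball.2 <| by linarith [mem_ball.1 hx₁', hd.dist_le_through_left y y₁ x x₁],
          mem_ball.2 <| by linarith [mem_ball.1 hx₂', hd.dist_le_through_left y y₂ x x₂]⟩
  apply ENNReal.ofReal_inv_exp_mul_mul_le
  calc ENNReal.ofReal Λ⁻¹ * μY (ball y₁ (ρ + ε))
      ≤ .ofReal (Real.exp δ) * (.ofReal Λ⁻¹ * μX (ball x₁ (ρ - 2 * ε + 5 * ε))) := by
        rw [mul_left_comm]; gcongr
    _ ≤ .ofReal (Real.exp δ) * μX (ball x₁ (ρ - 2 * ε) ∩ ball x₂ (ρ - 2 * ε)) := by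
        gcongr; exact hX x₁ hx₁ x₂ hx₂ hx₁₂
    _ ≤ .ofReal (Real.exp δ) * (.ofReal (Real.exp δ) * μY (ball y₁ ρ ∩ ball y₂ ρ)) := by gcongr
    _ = .ofReal (Real.exp (2 * δ)) * μY (ball y₁ ρ ∩ ball y₂ ρ) := by
        rw [← mul_assoc, ← ENNReal.ofReal_mul (Real.exp_pos δ).le, ← Real.exp_add, two_mul]

/-- Stability of the BIV condition under mm-relative `(ε,δ)`-closeness. -/
theorem BIV_stable_under_mm_closeness
    {X Y : Type*} [MetricSpace X] [CompactSpace X] [MeasurableSpace X] [BorelSpace X]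
    [MetricSpace Y] [CompactSpace Y] [MeasurableSpace Y] [BorelSpace Y]
    (μX : Measure X) (μY : Measure Y) [IsFiniteMeasure μX] [IsFiniteMeasure μY]
    (Λ ρ ε δ : ℝ) (hΛ : 0 < Λ) (hδ : 0 ≤ δ) (hε : 0 < ε) (hερ : ε ≤ ρ / 12)
    (hclose : MMClose μX μY ε δ)
    (hX : BIV μX Λ (ρ - 2 * ε) (5 * ε)) :
    BIV μY (Real.exp (2 * δ) * Λ) ρ ε :=
  BIV_stable_under_mm_closeness_general μX μY Λ ρ ε δ hclose hX
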